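/- arXiv:1811.08181 — 2 statements merged into one kernel-verified Lean document; each statement's English description precedes it below -/
import Mathlib

section
/- For every hypergraph H with hw(H) ≤ 2, it holds that ghw(H) = hw(H); in particular, if hw(H) = 2 then ghw(H) = 2. -/
/-- A hypergraph: a finite set of vertices and a finite set of nonempty edges,
each of which is a subset of the vertex set. -/
structure Hypergraph' (V : Type) where
  verts : Finset V
  edges : Finset (Finset V)
  nonempty_of_mem : ∀ e ∈ edges, e.Nonempty
  subset_verts : ∀ e ∈ edges, e ⊆ verts

variable {V : Type} [DecidableEq V]

/-- The data of a (generalized) hypertree decomposition: a finite rooted tree together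
with a bag `B_u` and an (integral) edge labelling `λ_u` (given as the finite set of edges
with value 1) for each node. -/
structure Decomp (V : Type) where
  n : ℕ
  tree : SimpleGraph (Fin n)
  root : Fin n
  bag : Fin n → Finset V
  cover : Fin n → Finset (Finset V)

/-- `u'` lies in the subtree `T_u` rooted at `u`: every path from the root to `u'`
passes through `u`. -/
def Decomp.desc (D : Decomp V) (u u' : Fin D.n) : Prop :=
  ∀ p : D.tree.Path D.root u', u ∈ p.1.support

/-- `D` is a generalized hypertree decomposition (GHD) of `H`:
the tree is a tree, every edge is covered by some bag, the set of nodes containing a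
given vertex is connected in the tree, each `λ_u` uses only edges of `H`, and
`B_u ⊆ B(λ_u)`. -/
def Decomp.IsGHD (H : Hypergraph' V) (D : Decomp V) : Prop :=
  D.tree.IsTree ∧
  (∀ e ∈ H.edges, ∃ u, e ⊆ D.bag u) ∧
  (∀ v : V, (D.tree.induce {u | v ∈ D.bag u}).Preconnected) ∧
  (∀ u, D.cover u ⊆ H.edges) ∧
  (∀ u, D.bag u ⊆ (D.cover u).biUnion id)

/-- `D` is a hypertree decomposition (HD) of `H`: a GHD satisfying in addition the
special condition `V(T_u) ∩ B(λ_u) ⊆ B_u` for every node `u`. -/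
def Decomp.IsHD (H : Hypergraph' V) (D : Decomp V) : Prop :=
  D.IsGHD H ∧
  ∀ u u', D.desc u u' → ∀ v ∈ D.bag u', v ∈ (D.cover u).biUnion id → v ∈ D.bag u

/-- The generalized hypertree width of `H`: the least `k` such that `H` has a GHD all of
whose labels `λ_u` have weight (cardinality) at most `k`. -/
noncomputable def ghw (H : Hypergraph' V) : ℕ :=
  sInf {k | ∃ D : Decomp V, D.IsGHD H ∧ ∀ u, (D.cover u).card ≤ k}

/-- The hypertree width of `H`: the least `k` such that `H` has an HD all of whose
labels `λ_u` have weight (cardinality) at most `k`. -/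
noncomputable def hw (H : Hypergraph' V) : ℕ :=
  sInf {k | ∃ D : Decomp V, D.IsHD H ∧ ∀ u, (D.cover u).card ≤ k}


/-!
A GHD in which every bag equals `B(λ_u)` is an HD, so for width at most one it suffices to
enlarge each bag to its covering edge. Copying the bag and label of a tree neighbour `b` onto a
node `a` with `B_a ⊆ B_b` keeps a GHD of the same width, and increases `∑ u, |B_u|` when
`B_a ⊂ B_b`; so a width-one GHD on a fixed tree maximising this sum has no such pair. Yet a bag
`B_u` strictly inside its covering edge `e` lies strictly inside a bag `B_w ⊇ e`, the tree path
from `u` to `w` stays in the subtree of every vertex of `B_u`, and where the bag first changes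
along that path there is such a pair.
-/

open Finset Function SimpleGraph

lemma SimpleGraph.IsAcyclic.support_subset_of_preconnected {α : Type*} {G : SimpleGraph α}
    (hG : G.IsAcyclic) {s : Set α} (hs : (G.induce s).Preconnected) {a b : α} (ha : a ∈ s)
    (hb : b ∈ s) (p : G.Path a b) : {t | t ∈ p.1.support} ⊆ s := by
  classical
  obtain ⟨q⟩ := hs ⟨a, ha⟩ ⟨b, hb⟩
  let q' := q.map (Embedding.induce s).toHom
  rw [(hG.subsingleton_path a b).elim p q'.toPath]
  intro t ht
  have ht' := Walk.support_map _ q ▸ q'.support_toPath_subset_support ht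
  obtain ⟨y, -, rfl⟩ := List.mem_map.1 ht'
  exact y.2

namespace Decomp

variable {H : Hypergraph' V} {D : Decomp V}

-- Reducible, so that `Fin (D.withBags b c).n` unfolds to `Fin D.n` during elaboration.
abbrev withBags (D : Decomp V) (b : Fin D.n → Finset V) (c : Fin D.n → Finset (Finset V)) :
    Decomp V :=
  ⟨D.n, D.tree, D.root, b, c⟩

lemma IsGHD.bag_subset_biUnion_edges (hD : D.IsGHD H) (u : Fin D.n) :
    D.bag u ⊆ H.edges.biUnion id :=
  (hD.2.2.2.2 u).trans (biUnion_subset_biUnion_of_subset_left _ (hD.2.2.2.1 u))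

lemma IsGHD.isHD_of_bag_eq_biUnion (hD : D.IsGHD H)
    (h : ∀ u, D.bag u = (D.cover u).biUnion id) : D.IsHD H :=
  ⟨hD, fun u _ _ _ _ hv => h u ▸ hv⟩

lemma IsGHD.withBags_update_of_adj (hD : D.IsGHD H) {u w : Fin D.n} (hadj : D.tree.Adj u w)
    (hsub : D.bag u ⊆ D.bag w) :
    (D.withBags (update D.bag u (D.bag w)) (update D.cover u (D.cover w))).IsGHD H := by
  obtain ⟨hT, hcov, hconn, hcs, hbs⟩ := hD
  refine ⟨hT, fun e he => ?_, fun x => ?_, fun (t : Fin D.n) => ?_, fun (t : Fin D.n) => ?_⟩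
  · obtain ⟨t, ht⟩ := hcov e he
    rcases eq_or_ne t u with rfl | htu
    · exact ⟨w, by simpa [hadj.ne.symm] using ht.trans hsub⟩
    · exact ⟨t, by simpa [htu] using ht⟩
  · show (D.tree.induce {t | x ∈ update D.bag u (D.bag w) t}).Preconnected
    by_cases hx : x ∈ D.bag w
    · have hset : {t | x ∈ update D.bag u (D.bag w) t} = {u, w} ∪ {t | x ∈ D.bag t} := by
        ext t
        rcases eq_or_ne t u with rfl | htu
        · simp [hx]
        · simpa [htu] using fun h : t = w => h ▸ hx
      rw [hset]
      exact (induce_union_connected (induce_pair_connected_of_adj hadj).preconnected (hconn x)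
        ⟨w, by simp, hx⟩).preconnected
    · have hset : {t | x ∈ update D.bag u (D.bag w) t} = {t | x ∈ D.bag t} := by
        ext t
        rcases eq_or_ne t u with rfl | htu
        · simpa using iff_of_false hx fun h => hx (hsub h)
        · simp [htu]
      exact hset ▸ hconn x
  · rcases eq_or_ne t u with rfl | htu <;> simp [*]
  · rcases eq_or_ne t u with rfl | htu <;> simp [*]

lemma IsGHD.exists_adj_bag_ssubset (hD : D.IsGHD H) {u w : Fin D.n} (h : D.bag u ⊂ D.bag w) :
    ∃ a b, D.tree.Adj a b ∧ D.bag a ⊂ D.bag b := by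
  obtain ⟨hT, -, hconn, -, -⟩ := hD
  let p := (hT.connected.preconnected u w).some.toPath
  have hsub : ∀ t ∈ p.1.support, D.bag u ⊆ D.bag t := fun t ht x hx =>
    hT.isAcyclic.support_subset_of_preconnected (hconn x) hx (h.1 hx) p ht
  obtain ⟨d, hd, hfst, hsnd⟩ := p.1.exists_boundary_dart {t | D.bag t = D.bag u} rfl h.ne'
  refine ⟨d.fst, d.snd, d.adj, ?_⟩
  rw [show D.bag d.fst = D.bag u from hfst]
  exact (hsub _ (p.1.dart_snd_mem_support_of_mem_darts hd)).ssubset_of_ne (Ne.symm hsnd)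

lemma IsGHD.exists_bag_ssubset (hD : D.IsGHD H) {u : Fin D.n} (hu : (D.cover u).card ≤ 1)
    (hne : D.bag u ≠ (D.cover u).biUnion id) : ∃ w, D.bag u ⊂ D.bag w := by
  obtain ⟨-, hcov, -, hcs, hbs⟩ := hD
  have hlt := (hbs u).ssubset_of_ne hne
  obtain ⟨e, hsub⟩ := card_le_one_iff_subset_singleton.1 hu
  rcases subset_singleton_iff.1 hsub with hc | hc <;> rw [hc] at hlt
  · simp at hlt
  · obtain ⟨w, hw⟩ := hcov e (hcs u (hc ▸ mem_singleton_self e))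
    exact ⟨w, (by simpa using hlt : D.bag u ⊂ e).trans_subset hw⟩

lemma IsGHD.exists_isHD_of_card_cover_le (hD : D.IsGHD H) {k : ℕ} (hk : k ≤ 1)
    (hw : ∀ u, (D.cover u).card ≤ k) :
    ∃ D' : Decomp V, D'.IsHD H ∧ ∀ u, (D'.cover u).card ≤ k := by
  classical
  let IsGood : (Fin D.n → Finset V) × (Fin D.n → Finset (Finset V)) → Prop := fun bc =>
    (D.withBags bc.1 bc.2).IsGHD H ∧ ∀ u, (bc.2 u).card ≤ k
  let goods := ((Fintype.piFinset fun _ => (H.edges.biUnion id).powerset) ×ˢ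
    (Fintype.piFinset fun _ => H.edges.powerset)).filter IsGood
  have mem_goods : ∀ bc, IsGood bc → bc ∈ goods := fun bc h => by
    simpa [goods, h] using ⟨h.1.bag_subset_biUnion_edges, h.1.2.2.2.1⟩
  obtain ⟨⟨b, c⟩, hbc, hmax⟩ := goods.exists_max_image (fun bc => ∑ u, (bc.1 u).card)
    ⟨(D.bag, D.cover), mem_goods _ ⟨hD, hw⟩⟩
  obtain ⟨hG, hc⟩ := (mem_filter.1 hbc).2
  refine ⟨D.withBags b c, hG.isHD_of_bag_eq_biUnion fun u => ?_, hc⟩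
  by_contra hne
  obtain ⟨w, huw⟩ := hG.exists_bag_ssubset ((hc u).trans hk) hne
  obtain ⟨x, y, hxy, hlt⟩ := hG.exists_adj_bag_ssubset huw
  have hgood : IsGood (update b x (b y), update c x (c y)) := by
    refine ⟨hG.withBags_update_of_adj hxy hlt.subset, fun t => ?_⟩
    rcases eq_or_ne t x with rfl | htx <;> simp [*]
  have hsum : ∑ u, (b u).card < ∑ u, (update b x (b y) u).card := by
    refine sum_lt_sum (fun t _ => ?_) ⟨x, mem_univ _, by simpa using card_lt_card hlt⟩
    rcases eq_or_ne t x with rfl | htx <;> simp [*, card_le_card hlt.subset]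
  exact (hmax _ (mem_goods _ hgood)).not_gt hsum

end Decomp

lemma exists_isHD_card_cover_le_card_edges (H : Hypergraph' V) :
    ∃ D : Decomp V, D.IsHD H ∧ ∀ u, (D.cover u).card ≤ H.edges.card := by
  let D : Decomp V := ⟨1, ⊥, 0, fun _ => H.edges.biUnion id, fun _ => H.edges⟩
  have hD : D.IsGHD H := ⟨.of_subsingleton, fun e he => ⟨0, subset_biUnion_of_mem id he⟩,
    fun _ => .of_subsingleton, fun _ => subset_rfl, fun _ => subset_rfl⟩
  exact ⟨D, hD.isHD_of_bag_eq_biUnion fun _ => rfl, fun _ => le_rfl⟩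

lemma ghw_le_hw (H : Hypergraph' V) : ghw H ≤ hw H := by
  obtain ⟨D, hD, hk⟩ := exists_isHD_card_cover_le_card_edges H
  obtain ⟨D', hD', hk'⟩ : ∃ D : Decomp V, D.IsHD H ∧ ∀ u, (D.cover u).card ≤ hw H :=
    Nat.sInf_mem (s := {k | ∃ D : Decomp V, D.IsHD H ∧ ∀ u, (D.cover u).card ≤ k})
      ⟨_, D, hD, hk⟩
  exact Nat.sInf_le ⟨D', hD'.1, hk'⟩

lemma hw_le_ghw_of_ghw_le_one (H : Hypergraph' V) (h : ghw H ≤ 1) : hw H ≤ ghw H := by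
  obtain ⟨D, hD, hk⟩ := exists_isHD_card_cover_le_card_edges H
  obtain ⟨D', hD', hk'⟩ : ∃ D : Decomp V, D.IsGHD H ∧ ∀ u, (D.cover u).card ≤ ghw H :=
    Nat.sInf_mem (s := {k | ∃ D : Decomp V, D.IsGHD H ∧ ∀ u, (D.cover u).card ≤ k})
      ⟨_, D, hD.1, hk⟩
  obtain ⟨D'', hD'', hk''⟩ := hD'.exists_isHD_of_card_cover_le h hk'
  exact Nat.sInf_le ⟨D'', hD'', hk''⟩

/-- For every hypergraph `H` with `hw(H) ≤ 2` it holds that `ghw(H) = hw(H)`;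
in particular, if `hw(H) = 2` then `ghw(H) = 2`. -/
theorem ghw_eq_hw_of_hw_le_two (H : Hypergraph' V) :
    (hw H ≤ 2 → ghw H = hw H) ∧ (hw H = 2 → ghw H = 2) := by
  have key : hw H ≤ 2 → ghw H = hw H := fun h2 => by
    have := ghw_le_hw H
    have := hw_le_ghw_of_ghw_le_one H
    omega
  exact ⟨key, fun h2 => (key h2.le).trans h2⟩
end

section
/- For every hypergraph H = (V(H), E(H)) and every k ≥ 1: ghw(H) ≤ k if and only if hw(H') ≤ k, where H' = (V(H), E(H) ∪ f(H,k)) and f(H,k) is the set of all nonempty subsets of sets of the form e ∩ (e_1 ∪ ⋯ ∪ e_j) with e ∈ E(H), j ≤ k, and e_1, …, e_j ∈ E(H) \ {e}. -/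
variable {V : Type} [DecidableEq V]

/-- The set `f(H,k)` of subedges: all nonempty subsets of sets of the form
`e ∩ (e₁ ∪ ⋯ ∪ e_j)` with `e ∈ E(H)`, `j ≤ k` and `e₁, …, e_j ∈ E(H) \ {e}`. -/
def fsub (H : Hypergraph' V) (k : ℕ) : Finset (Finset V) :=
  H.edges.biUnion fun e =>
    (((H.edges.erase e).powerset.filter fun F => F.card ≤ k).biUnion fun F =>
      (e ∩ F.biUnion id).powerset.filter fun s => s.Nonempty)


/-!
Given a GHD of width `k`, first add to each bag `B_u` every edge `e ∈ λ_u` that lies in all the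
labels along a tree path from `u` to a bag containing `e`; the bags stay connected. Then replace
each label edge `e ∈ λ_u` by `e ∩ B_u`, which makes the special condition trivial. Such a piece is
either `e` itself or, if some node `y` on that path has `e ∉ λ_y`, contained in `e ∩ ⋃ λ_y` by
connectedness of the bags, hence in `f(H,k)`. Conversely, every edge of `H'` lies in an edge of
`H`, so enlarging the labels of an HD of `H'` gives a GHD of `H`.
-/

open Finset

namespace SimpleGraph

variable {α : Type*} {G : SimpleGraph α}

theorem IsAcyclic.support_subset_of_preconnected_induce (hG : G.IsAcyclic) {S : Set α}
    (hS : (G.induce S).Preconnected) {a b : α} (ha : a ∈ S) (hb : b ∈ S) (p : G.Path a b) :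
    ∀ x ∈ p.1.support, x ∈ S := by
  classical
  obtain ⟨w⟩ := hS ⟨a, ha⟩ ⟨b, hb⟩
  set w' := w.map (Embedding.induce S).toHom
  have hp : p = ⟨w'.bypass, w'.bypass_isPath⟩ := (hG.subsingleton_path a b).elim _ _
  intro x hx
  rw [hp] at hx
  have hx' := w'.support_bypass_subset_support hx
  rw [Walk.support_map, List.mem_map] at hx'
  obtain ⟨y, -, rfl⟩ := hx'
  exact y.2

theorem IsAcyclic.support_subset_of_mem_support (hG : G.IsAcyclic) {a b x : α}
    (p : G.Path a b) (hx : x ∈ p.1.support) (q : G.Path x b) : q.1.support ⊆ p.1.support := by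
  classical
  obtain rfl : q = ⟨p.1.dropUntil x hx, p.2.dropUntil hx⟩ := (hG.subsingleton_path x b).elim _ _
  exact p.1.support_dropUntil_subset_support hx

theorem preconnected_induce_of_forall_reachable {S T : Set α} (hST : S ⊆ T)
    (hS : (G.induce S).Preconnected)
    (hT : ∀ a (ha : a ∈ T), ∃ b, ∃ hb : b ∈ S, (G.induce T).Reachable ⟨a, ha⟩ ⟨b, hST hb⟩) :
    (G.induce T).Preconnected := by
  rintro ⟨a, ha⟩ ⟨b, hb⟩
  obtain ⟨a', ha', ra⟩ := hT a ha
  obtain ⟨b', hb', rb⟩ := hT b hb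
  exact ra.trans (((hS ⟨a', ha'⟩ ⟨b', hb'⟩).map (G.induceHomOfLE hST).toHom).trans rb.symm)

end SimpleGraph

theorem mem_fsub {H : Hypergraph' V} {k : ℕ} {s : Finset V} :
    s ∈ fsub H k ↔ ∃ e ∈ H.edges, ∃ F ⊆ H.edges.erase e,
      F.card ≤ k ∧ s ⊆ e ∩ F.biUnion id ∧ s.Nonempty := by
  simp only [fsub, mem_biUnion, mem_filter, mem_powerset, and_assoc]

theorem exists_superedge_of_mem_fsub {H : Hypergraph' V} {k : ℕ} {s : Finset V}
    (hs : s ∈ fsub H k) : ∃ e ∈ H.edges, s ⊆ e := by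
  obtain ⟨e, he, _, -, -, hse, -⟩ := mem_fsub.1 hs
  exact ⟨e, he, hse.trans inter_subset_left⟩

theorem exists_superset_edge_of_mem_union_fsub {H : Hypergraph' V} {k : ℕ} {s : Finset V}
    (hs : s ∈ H.edges ∪ fsub H k) : ∃ e ∈ H.edges, s ⊆ e :=
  (mem_union.1 hs).elim (fun h => ⟨s, h, subset_rfl⟩) exists_superedge_of_mem_fsub

namespace Decomp

variable {H H' : Hypergraph' V} {D : Decomp V}

theorem IsGHD.isHD_of_biUnion_cover_subset (hD : D.IsGHD H)
    (hcover : ∀ u, (D.cover u).biUnion id ⊆ D.bag u) : D.IsHD H :=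
  ⟨hD, fun u _ _ _ _ hv => hcover u hv⟩

def single (E : Finset (Finset V)) : Decomp V where
  n := 1
  tree := ⊥
  root := 0
  bag _ := E.biUnion id
  cover _ := E

theorem isHD_single (H : Hypergraph' V) : (single H.edges).IsHD H := by
  have : Subsingleton (Fin (single H.edges).n) := inferInstanceAs (Subsingleton (Fin 1))
  have : Nonempty (Fin (single H.edges).n) := inferInstanceAs (Nonempty (Fin 1))
  refine IsGHD.isHD_of_biUnion_cover_subset ⟨.of_subsingleton,
    fun e he => ⟨Classical.arbitrary _, subset_biUnion_of_mem id he⟩,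
    fun v a b => by rw [Subsingleton.elim a b], fun _ => subset_rfl, fun _ => subset_rfl⟩
    fun _ => subset_rfl

theorem _root_.ghw_le_iff {k : ℕ} :
    ghw H ≤ k ↔ ∃ D : Decomp V, D.IsGHD H ∧ ∀ u, (D.cover u).card ≤ k := by
  have hne : {m | ∃ D : Decomp V, D.IsGHD H ∧ ∀ u, (D.cover u).card ≤ m}.Nonempty :=
    ⟨H.edges.card, single H.edges, (isHD_single H).1, fun _ => le_rfl⟩
  refine ⟨fun h => ?_, fun ⟨D, hD, hk⟩ => Nat.sInf_le ⟨D, hD, hk⟩⟩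
  obtain ⟨D, hD, hDk⟩ := Nat.sInf_mem hne
  exact ⟨D, hD, fun u => (hDk u).trans h⟩

theorem _root_.hw_le_iff {k : ℕ} :
    hw H ≤ k ↔ ∃ D : Decomp V, D.IsHD H ∧ ∀ u, (D.cover u).card ≤ k := by
  have hne : {m | ∃ D : Decomp V, D.IsHD H ∧ ∀ u, (D.cover u).card ≤ m}.Nonempty :=
    ⟨H.edges.card, single H.edges, isHD_single H, fun _ => le_rfl⟩
  refine ⟨fun h => ?_, fun ⟨D, hD, hk⟩ => Nat.sInf_le ⟨D, hD, hk⟩⟩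
  obtain ⟨D, hD, hDk⟩ := Nat.sInf_mem hne
  exact ⟨D, hD, fun u => (hDk u).trans h⟩

def Carries (D : Decomp V) (u : Fin D.n) (e : Finset V) : Prop :=
  ∃ z, e ⊆ D.bag z ∧ ∀ p : D.tree.Path u z, ∀ y ∈ p.1.support, e ∈ D.cover y

open Classical in
noncomputable def saturate (D : Decomp V) : Decomp V :=
  { D with bag := fun u => D.bag u ∪ ((D.cover u).filter (D.Carries u)).biUnion id }

theorem mem_saturate_bag {u : Fin D.n} {v : V} :
    v ∈ D.saturate.bag u ↔ v ∈ D.bag u ∨ ∃ e ∈ D.cover u, D.Carries u e ∧ v ∈ e := by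
  simp [saturate, and_assoc]

theorem bag_subset_saturate_bag (u : Fin D.n) : D.bag u ⊆ D.saturate.bag u :=
  fun _ hv => mem_saturate_bag.2 (.inl hv)

theorem subset_saturate_bag {u : Fin D.n} {e : Finset V} (he : e ∈ D.cover u)
    (hc : D.Carries u e) : e ⊆ D.saturate.bag u :=
  fun _ hv => mem_saturate_bag.2 (.inr ⟨e, he, hc, hv⟩)

theorem IsGHD.saturate_bag_subset (hD : D.IsGHD H) (u : Fin D.n) :
    D.saturate.bag u ⊆ (D.cover u).biUnion id := by
  intro v hv
  rcases mem_saturate_bag.1 hv with hv | ⟨e, he, -, hve⟩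
  · exact hD.2.2.2.2 u hv
  · exact mem_biUnion.2 ⟨e, he, hve⟩

theorem Carries.exists_walk_subset_saturate_bag (ht : D.tree.IsTree) {u : Fin D.n}
    {e : Finset V} (hc : D.Carries u e) :
    ∃ z, e ⊆ D.bag z ∧ ∃ w : D.tree.Walk u z, ∀ x ∈ w.support, e ⊆ D.saturate.bag x := by
  obtain ⟨z, hz, hcov⟩ := hc
  obtain ⟨w⟩ := ht.connected.preconnected u z
  let p : D.tree.Path u z := ⟨w.bypass, w.bypass_isPath⟩
  refine ⟨z, hz, p.1, fun x hx => subset_saturate_bag (hcov p x hx) ⟨z, hz, fun q y hy => ?_⟩⟩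
  exact hcov p y (ht.isAcyclic.support_subset_of_mem_support p hx q hy)

theorem IsGHD.saturate (hD : D.IsGHD H) : D.saturate.IsGHD H := by
  obtain ⟨ht, hcov, hconn, hedges, -⟩ := id hD
  refine ⟨ht, fun e he => ?_, fun v => ?_, hedges, hD.saturate_bag_subset⟩
  · obtain ⟨u, hu⟩ := hcov e he
    exact ⟨u, hu.trans (bag_subset_saturate_bag u)⟩
  refine SimpleGraph.preconnected_induce_of_forall_reachable (G := D.tree)
    (S := {u | v ∈ D.bag u}) (T := {u | v ∈ D.saturate.bag u})
    (fun u hu => bag_subset_saturate_bag u hu) (hconn v) fun a ha => ?_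
  rcases mem_saturate_bag.1 ha with hv | ⟨e, -, hc, hve⟩
  · exact ⟨a, hv, .rfl⟩
  obtain ⟨z, hz, w, hw⟩ := hc.exists_walk_subset_saturate_bag ht
  exact ⟨z, hz hve, ⟨w.induce _ fun x hx => hw x hx hve⟩⟩

theorem IsGHD.exists_not_mem_cover_inter_saturate_bag_subset (hD : D.IsGHD H) {u : Fin D.n}
    {e : Finset V} (he : e ∈ D.cover u) (hc : ¬ D.Carries u e) :
    ∃ y, e ∉ D.cover y ∧ e ∩ D.saturate.bag u ⊆ D.saturate.bag y := by
  obtain ⟨z, hz⟩ := hD.2.1 e (hD.2.2.2.1 u he)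
  simp only [Carries, not_exists, not_and, not_forall] at hc
  obtain ⟨p, y, hy, hey⟩ := hc z hz
  refine ⟨y, hey, fun v hv => ?_⟩
  rw [mem_inter] at hv
  exact hD.1.isAcyclic.support_subset_of_preconnected_induce (hD.saturate.2.2.1 v) hv.2
    (bag_subset_saturate_bag z (hz hv.1)) p y hy

def trim (D : Decomp V) : Decomp V :=
  { D with cover := fun u => ((D.cover u).image (· ∩ D.bag u)).filter (·.Nonempty) }

theorem card_trim_cover_le (u : Fin D.n) : (D.trim.cover u).card ≤ (D.cover u).card :=
  (card_filter_le _ _).trans card_image_le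

theorem IsGHD.trim_isHD (hD : D.IsGHD H) (hcov : ∀ s ∈ H'.edges, ∃ u, s ⊆ D.bag u)
    (hpieces : ∀ u, ∀ e ∈ D.cover u, (e ∩ D.bag u).Nonempty → e ∩ D.bag u ∈ H'.edges) :
    D.trim.IsHD H' := by
  refine IsGHD.isHD_of_biUnion_cover_subset ⟨hD.1, hcov, hD.2.2.1, fun u s hs => ?_,
    fun u v hv => ?_⟩ fun u v hv => ?_
  · obtain ⟨⟨e, he, rfl⟩, hne⟩ : (∃ e ∈ D.cover u, e ∩ D.bag u = s) ∧ s.Nonempty := by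
      simpa [trim] using hs
    exact hpieces u e he hne
  · obtain ⟨e, he, hve⟩ := mem_biUnion.1 (hD.2.2.2.2 u hv)
    have hv' : v ∈ e ∩ D.bag u := mem_inter.2 ⟨hve, hv⟩
    exact mem_biUnion.2 ⟨e ∩ D.bag u, by simpa [trim] using ⟨⟨e, he, rfl⟩, v, hv'⟩, hv'⟩
  · obtain ⟨s, hs, hvs⟩ := mem_biUnion.1 hv
    obtain ⟨⟨e, -, rfl⟩, -⟩ : (∃ e ∈ D.cover u, e ∩ D.bag u = s) ∧ s.Nonempty := by
      simpa [trim] using hs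
    exact (mem_inter.1 hvs).2

theorem IsGHD.saturate_trim_isHD (hD : D.IsGHD H) {k : ℕ} (hk : ∀ u, (D.cover u).card ≤ k)
    (he : H'.edges = H.edges ∪ fsub H k) : D.saturate.trim.IsHD H' := by
  refine hD.saturate.trim_isHD (fun s hs => ?_) fun u e heu hne => ?_
  · obtain ⟨t, ht, hst⟩ := exists_superset_edge_of_mem_union_fsub (he ▸ hs)
    obtain ⟨u, hu⟩ := hD.saturate.2.1 t ht
    exact ⟨u, hst.trans hu⟩
  have heH : e ∈ H.edges := hD.2.2.2.1 u heu
  rw [he]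
  by_cases hc : D.Carries u e
  · rw [inter_eq_left.2 (subset_saturate_bag (D := D) heu hc)]
    exact mem_union_left _ heH
  obtain ⟨y, hey, hsub⟩ := hD.exists_not_mem_cover_inter_saturate_bag_subset heu hc
  refine mem_union_right _ (mem_fsub.2 ⟨e, heH, D.cover y, fun f hf => ?_, hk y,
    subset_inter inter_subset_left (hsub.trans (hD.saturate_bag_subset y)), hne⟩)
  exact mem_erase.2 ⟨ne_of_mem_of_not_mem hf hey, hD.2.2.2.1 y hf⟩

def mapCover (D : Decomp V) (g : Finset V → Finset V) : Decomp V :=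
  { D with cover := fun u => (D.cover u).image g }

theorem IsGHD.mapCover (hD : D.IsGHD H') (hE : H.edges ⊆ H'.edges) {g : Finset V → Finset V}
    (hg : ∀ s ∈ H'.edges, g s ∈ H.edges ∧ s ⊆ g s) : (D.mapCover g).IsGHD H := by
  obtain ⟨ht, hcov, hconn, hedges, hbag⟩ := hD
  refine ⟨ht, fun e he => hcov e (hE he), hconn, fun u s hs => ?_, fun u v hv => ?_⟩
  · obtain ⟨t, htu, rfl⟩ := mem_image.1 hs
    exact (hg t (hedges u htu)).1
  · obtain ⟨t, htu, hvt⟩ := mem_biUnion.1 (hbag u hv)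
    exact mem_biUnion.2 ⟨g t, mem_image_of_mem g htu, (hg t (hedges u htu)).2 hvt⟩

end Decomp

theorem ghw_le_iff_hw_fsub_le_general (H : Hypergraph' V) (k : ℕ)
    (H' : Hypergraph' V)
    (he : H'.edges = H.edges ∪ fsub H k) :
    ghw H ≤ k ↔ hw H' ≤ k := by
  rw [ghw_le_iff, hw_le_iff]
  constructor
  · rintro ⟨D, hD, hk⟩
    exact ⟨D.saturate.trim, hD.saturate_trim_isHD hk he,
      fun u => (D.saturate.card_trim_cover_le u).trans (hk u)⟩
  · rintro ⟨D, hD, hk⟩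
    choose! g hg using fun s (hs : s ∈ H'.edges) =>
      exists_superset_edge_of_mem_union_fsub (he ▸ hs)
    exact ⟨D.mapCover g, hD.1.mapCover (he ▸ subset_union_left) hg,
      fun u => card_image_le.trans (hk u)⟩

/-- For every hypergraph `H` and every `k ≥ 1`: `ghw(H) ≤ k` iff `hw(H') ≤ k`, where
`H' = (V(H), E(H) ∪ f(H,k))`. -/
theorem ghw_le_iff_hw_fsub_le (H : Hypergraph' V) (k : ℕ) (hk : 1 ≤ k)
    (H' : Hypergraph' V) (hv : H'.verts = H.verts)
    (he : H'.edges = H.edges ∪ fsub H k) :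
    ghw H ≤ k ↔ hw H' ≤ k :=
  ghw_le_iff_hw_fsub_le_general H k H' he
end
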